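/- For 0 < q < 1, 0 < z < 1, and n ≥ 1, we have (1 - q^{n+1})/(1 - q^{n+2}) · (I_n(q;z))^2 < I_{n-1}(q;z) · I_{n+1}(q;z), where I_n(q;z) = Σ_{k=n+1}^∞ z^k/(q;q)_k. -/

import Mathlib

open Finset Filter Topology

noncomputable def qPoch (q : ℝ) (m : ℕ) : ℝ := ∏ j ∈ Finset.range m, (1 - q ^ (j + 1))

/-- Tail of the q-exponential e(q;z) starting at index m; I_n(q;z) = qexpTail q z (n+1). -/
noncomputable def qexpTail (q z : ℝ) (m : ℕ) : ℝ := ∑' k : ℕ, z ^ (m + k) / qPoch q (m + k)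

/-!
Write `a k = z^k/(q;q)_k`, so that `a (m+1) = a m · z/(1 - q^(m+1))`. The ratio
`(1 - q^(j+1))/(1 - q^j)` decreases in `j`, which gives the termwise inequality
`a (n+1+k)^2 ≤ c · a (n+k) · a (n+2+k)` with `c = (1 - q^(n+2))/(1 - q^(n+1))`, strict for
`k ≥ 1`. Cauchy–Schwarz for series, with the strict termwise inequality at `k = 1`, turns this
into `I_n^2 < c · I_{n-1} · I_{n+1}`.
-/

theorem tsum_sqrt_mul_sqrt_le {ι : Type*} {f g : ι → ℝ} (hf : ∀ i, 0 ≤ f i) (hg : ∀ i, 0 ≤ g i)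
    (hfs : Summable f) (hgs : Summable g) :
    ∑' i, √(f i) * √(g i) ≤ √(∑' i, f i) * √(∑' i, g i) :=
  Real.tsum_le_of_sum_le (fun i => by positivity) fun s =>
    (Real.sum_sqrt_mul_sqrt_le s hf hg).trans <| by
      gcongr
      exacts [hfs.sum_le_tsum s fun i _ => hf i, hgs.sum_le_tsum s fun i _ => hg i]

theorem sq_tsum_lt_tsum_mul_tsum {t u v : ℕ → ℝ} (ht : ∀ k, 0 ≤ t k) (hu : ∀ k, 0 ≤ u k)
    (hv : ∀ k, 0 ≤ v k) (hus : Summable u) (hvs : Summable v)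
    (hle : ∀ k, t k ^ 2 ≤ u k * v k) {j : ℕ} (hlt : t j ^ 2 < u j * v j) :
    (∑' k, t k) ^ 2 < (∑' k, u k) * ∑' k, v k := by
  have hgeom : ∀ k, √(u k) * √(v k) ≤ (u k + v k) / 2 := fun k => by
    nlinarith [two_mul_le_add_sq √(u k) √(v k), Real.sq_sqrt (hu k), Real.sq_sqrt (hv k)]
  have hgeom_summable : Summable fun k => √(u k) * √(v k) :=
    .of_nonneg_of_le (fun k => by positivity) hgeom ((hus.add hvs).div_const 2)
  have hlt_tsum : ∑' k, t k < ∑' k, √(u k) * √(v k) := by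
    refine Summable.tsum_lt_tsum_of_nonneg (i := j) ht (fun k => ?_) ?_ hgeom_summable
    · rw [← Real.sqrt_mul (hu k)]
      exact Real.le_sqrt_of_sq_le (hle k)
    · rw [← Real.sqrt_mul (hu j)]
      exact (Real.lt_sqrt (ht j)).2 hlt
  calc (∑' k, t k) ^ 2 < (∑' k, √(u k) * √(v k)) ^ 2 :=
        pow_lt_pow_left₀ hlt_tsum (tsum_nonneg ht) two_ne_zero
    _ ≤ (√(∑' k, u k) * √(∑' k, v k)) ^ 2 := by
        gcongr
        exact tsum_sqrt_mul_sqrt_le hu hv hus hvs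
    _ = (∑' k, u k) * ∑' k, v k := by
        rw [mul_pow, Real.sq_sqrt (tsum_nonneg hu), Real.sq_sqrt (tsum_nonneg hv)]

theorem one_sub_pow_pos {q : ℝ} (hq : |q| < 1) {m : ℕ} (hm : m ≠ 0) : 0 < 1 - q ^ m := by
  have : |q| ^ m < 1 := pow_lt_one₀ (abs_nonneg q) hq hm
  linarith [le_abs_self (q ^ m), abs_pow q m]

theorem one_sub_pow_mul_one_sub_pow_succ_le {q : ℝ} (hq0 : 0 ≤ q) (hq1 : q ≤ 1) {i j : ℕ}
    (hij : i ≤ j) : (1 - q ^ i) * (1 - q ^ (j + 1)) ≤ (1 - q ^ (i + 1)) * (1 - q ^ j) := by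
  have hgap : (1 - q ^ (i + 1)) * (1 - q ^ j) - (1 - q ^ i) * (1 - q ^ (j + 1))
      = (q ^ i - q ^ j) * (1 - q) := by ring
  nlinarith [pow_le_pow_of_le_one hq0 hq1 hij]

theorem one_sub_pow_mul_one_sub_pow_succ_lt {q : ℝ} (hq0 : 0 < q) (hq1 : q < 1) {i j : ℕ}
    (hij : i < j) : (1 - q ^ i) * (1 - q ^ (j + 1)) < (1 - q ^ (i + 1)) * (1 - q ^ j) := by
  have hgap : (1 - q ^ (i + 1)) * (1 - q ^ j) - (1 - q ^ i) * (1 - q ^ (j + 1))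
      = (q ^ i - q ^ j) * (1 - q) := by ring
  nlinarith [pow_lt_pow_right_of_lt_one₀ hq0 hq1 hij]

theorem qPoch_succ (q : ℝ) (m : ℕ) : qPoch q (m + 1) = qPoch q m * (1 - q ^ (m + 1)) :=
  Finset.prod_range_succ _ m

theorem qPoch_pos {q : ℝ} (hq : |q| < 1) (m : ℕ) : 0 < qPoch q m :=
  Finset.prod_pos fun j _ => one_sub_pow_pos hq j.succ_ne_zero

noncomputable def qexpTerm (q z : ℝ) (k : ℕ) : ℝ := z ^ k / qPoch q k

theorem qexpTail_eq_tsum (q z : ℝ) (m : ℕ) : qexpTail q z m = ∑' k, qexpTerm q z (m + k) := rfl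

theorem qexpTerm_succ (q z : ℝ) (m : ℕ) :
    qexpTerm q z (m + 1) = qexpTerm q z m * (z / (1 - q ^ (m + 1))) := by
  rw [qexpTerm, qexpTerm, qPoch_succ, pow_succ, div_mul_div_comm]

theorem summable_qexpTerm {q z : ℝ} (hq : |q| < 1) (hz : |z| < 1) : Summable (qexpTerm q z) := by
  obtain ⟨r, hzr, hr1⟩ := exists_between hz
  have hpow : Tendsto (fun m : ℕ => q ^ (m + 1)) atTop (𝓝 0) :=
    (tendsto_pow_atTop_nhds_zero_of_abs_lt_one hq).comp (tendsto_add_atTop_nat 1)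
  have hratio : Tendsto (fun m : ℕ => |z| / (1 - q ^ (m + 1))) atTop (𝓝 |z|) := by
    convert (tendsto_const_nhds (x := |z|)).div (tendsto_const_nhds.sub hpow)
      (by norm_num : (1 : ℝ) - 0 ≠ 0) using 2 <;> simp
  refine summable_of_ratio_norm_eventually_le hr1 ?_
  filter_upwards [hratio.eventually (gt_mem_nhds hzr)] with m hm
  rw [qexpTerm_succ, norm_mul, mul_comm, Real.norm_eq_abs (z / _), abs_div,
    abs_of_pos (one_sub_pow_pos hq m.succ_ne_zero)]
  gcongr

theorem qexpTerm_pos {q z : ℝ} (hq : |q| < 1) (hz : 0 < z) (k : ℕ) : 0 < qexpTerm q z k :=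
  div_pos (pow_pos hz k) (qPoch_pos hq k)

theorem qexpTerm_turan_gap {q : ℝ} (hq : |q| < 1) (z : ℝ) (n m : ℕ) :
    qexpTerm q z m * ((1 - q ^ (n + 2)) / (1 - q ^ (n + 1)) * qexpTerm q z (m + 2))
        - qexpTerm q z (m + 1) ^ 2
      = (qexpTerm q z m * z) ^ 2 * ((1 - q ^ (n + 2)) * (1 - q ^ (m + 1))
          - (1 - q ^ (n + 1)) * (1 - q ^ (m + 2)))
        / ((1 - q ^ (n + 1)) * (1 - q ^ (m + 1)) ^ 2 * (1 - q ^ (m + 2))) := by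
  have hA1 := one_sub_pow_pos hq (m := n + 1) (by omega)
  have hp1 := one_sub_pow_pos hq (m := m + 1) (by omega)
  have hp2 := one_sub_pow_pos hq (m := m + 2) (by omega)
  rw [qexpTerm_succ q z (m + 1), qexpTerm_succ q z m]
  field_simp

theorem qexpTerm_succ_sq_le {q : ℝ} (hq0 : 0 ≤ q) (hq1 : q < 1) (z : ℝ) {n m : ℕ} (hnm : n ≤ m) :
    qexpTerm q z (m + 1) ^ 2
      ≤ qexpTerm q z m * ((1 - q ^ (n + 2)) / (1 - q ^ (n + 1)) * qexpTerm q z (m + 2)) := by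
  have hq : |q| < 1 := abs_lt.2 ⟨by linarith, hq1⟩
  have hratio := one_sub_pow_mul_one_sub_pow_succ_le hq0 hq1.le (i := n + 1) (j := m + 1)
    (by omega)
  have hA1 := one_sub_pow_pos hq (m := n + 1) (by omega)
  have hp1 := one_sub_pow_pos hq (m := m + 1) (by omega)
  have hp2 := one_sub_pow_pos hq (m := m + 2) (by omega)
  rw [← sub_nonneg, qexpTerm_turan_gap hq]
  exact div_nonneg (mul_nonneg (sq_nonneg _) (by linarith)) (by positivity)

theorem qexpTerm_succ_sq_lt {q z : ℝ} (hq0 : 0 < q) (hq1 : q < 1) (hz : 0 < z) {n m : ℕ}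
    (hnm : n < m) :
    qexpTerm q z (m + 1) ^ 2
      < qexpTerm q z m * ((1 - q ^ (n + 2)) / (1 - q ^ (n + 1)) * qexpTerm q z (m + 2)) := by
  have hq : |q| < 1 := abs_lt.2 ⟨by linarith, hq1⟩
  have hratio := one_sub_pow_mul_one_sub_pow_succ_lt hq0 hq1 (i := n + 1) (j := m + 1)
    (by omega)
  have hA1 := one_sub_pow_pos hq (m := n + 1) (by omega)
  have hp1 := one_sub_pow_pos hq (m := m + 1) (by omega)
  have hp2 := one_sub_pow_pos hq (m := m + 2) (by omega)
  have hterm := qexpTerm_pos hq hz m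
  rw [← sub_pos, qexpTerm_turan_gap hq]
  exact div_pos (mul_pos (by positivity) (by linarith)) (by positivity)

theorem turan_left_I_general (q z : ℝ) (n : ℕ) (hq0 : 0 < q) (hq1 : q < 1)
    (hz0 : 0 < z) (hz1 : z < 1) :
    (1 - q ^ (n + 1)) / (1 - q ^ (n + 2)) * (qexpTail q z (n + 1)) ^ 2 <
      qexpTail q z n * qexpTail q z (n + 2) := by
  have hq : |q| < 1 := abs_lt.2 ⟨by linarith, hq1⟩
  have hA1 := one_sub_pow_pos hq (m := n + 1) (by omega)
  have hA2 := one_sub_pow_pos hq (m := n + 2) (by omega)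
  set c := (1 - q ^ (n + 2)) / (1 - q ^ (n + 1)) with hc
  have hterm (k : ℕ) : 0 ≤ qexpTerm q z k := (qexpTerm_pos hq hz0 k).le
  have htail (m : ℕ) : Summable fun k => qexpTerm q z (m + k) :=
    (summable_qexpTerm hq (abs_lt.2 ⟨by linarith, hz1⟩)).comp_injective (add_right_injective m)
  have key : qexpTail q z (n + 1) ^ 2 < qexpTail q z n * (c * qexpTail q z (n + 2)) := by
    rw [qexpTail_eq_tsum, qexpTail_eq_tsum, qexpTail_eq_tsum, ← tsum_mul_left (a := c)]
    refine sq_tsum_lt_tsum_mul_tsum (j := 1) (fun _ => hterm _) (fun _ => hterm _)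
      (fun _ => mul_nonneg (by positivity) (hterm _)) (htail n) ((htail (n + 2)).mul_left c)
      (fun k => ?_) ?_
    · simpa only [Nat.add_right_comm n _ k] using
        qexpTerm_succ_sq_le hq0.le hq1 z (Nat.le_add_right n k)
    · simpa only [Nat.add_right_comm n _ 1] using
        qexpTerm_succ_sq_lt hq0 hq1 hz0 (Nat.lt_add_one n)
  calc (1 - q ^ (n + 1)) / (1 - q ^ (n + 2)) * qexpTail q z (n + 1) ^ 2
      < (1 - q ^ (n + 1)) / (1 - q ^ (n + 2)) * (qexpTail q z n * (c * qexpTail q z (n + 2))) := by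
        gcongr
    _ = qexpTail q z n * qexpTail q z (n + 2) := by
        rw [hc]
        field_simp

theorem turan_left_I (q z : ℝ) (n : ℕ) (hq0 : 0 < q) (hq1 : q < 1)
    (hz0 : 0 < z) (hz1 : z < 1) (hn : 1 ≤ n) :
    (1 - q ^ (n + 1)) / (1 - q ^ (n + 2)) * (qexpTail q z (n + 1)) ^ 2 <
      qexpTail q z n * qexpTail q z (n + 2) :=
  turan_left_I_general q z n hq0 hq1 hz0 hz1
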